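/- Let (L_t)_{t ≥ 1} be independent, identically distributed, strictly positive (a.s.), integrable random variables with E[L_1] = 1. Define R_0 = 0, R_{t+1} = (1 + R_t) · L_{t+1}, and for B > 0 let T_B = inf{ t ≥ 1 : R_t ≥ B } (with inf ∅ = ∞). Then E[T_B] ≥ B. -/

import Mathlib

open MeasureTheory ProbabilityTheory
open scoped ENNReal

noncomputable section

namespace QCDStmt

/-- The Shiryaev–Roberts recursion `R 0 = 0`, `R (t+1) = (1 + R t) · L t`
(here `L t` is the likelihood ratio of the `(t+1)`-st observation). -/
def srStat {Ω : Type*} (L : ℕ → Ω → ℝ) : ℕ → Ω → ℝ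
  | 0 => fun _ => 0
  | t + 1 => fun ω => (1 + srStat L t ω) * L t ω

/-- The hitting time `T_B = inf {t ≥ 1 : R t ≥ B}` (with `inf ∅ = ∞`). -/
def srHit {Ω : Type*} (L : ℕ → Ω → ℝ) (B : ℝ) (ω : Ω) : ℕ∞ :=
  sInf {s : ℕ∞ | ∃ t : ℕ, s = (t : ℕ∞) ∧ 1 ≤ t ∧ B ≤ srStat L t ω}

/-!
Conditionally on `L 0, …, L (n-1)`, the factor `L n` has mean `1`, so `R n - n` is a martingale:
`∫_A R (n+1) = P A + ∫_A R n` for every event `A` determined by `L 0, …, L (n-1)`.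
Applying this to `A = {T > n}` and using `R (n+1) ≥ B` on `{T = n+1}` telescopes (optional
stopping by hand) to `B · P(T ≤ N) + E[R N; T > N] ≤ ∑_{n<N} P(T > n) ≤ E[T]`.
Since `R N ≥ 0` and `P(T > N) → 0` whenever `E[T] < ∞`, letting `N → ∞` gives `B ≤ E[T]`.
-/

open Filter Topology

section SigmaBefore

variable {Ω β : Type*} [MeasurableSpace β] {X : ℕ → Ω → β}

@[reducible] def sigmaBefore (X : ℕ → Ω → β) (n : ℕ) : MeasurableSpace Ω :=
  ⨆ i ∈ Set.Iio n, MeasurableSpace.comap (X i) inferInstance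

lemma measurable_sigmaBefore {i n : ℕ} (h : i < n) :
    Measurable[sigmaBefore X n] (X i) :=
  measurable_iff_comap_le.mpr
    (le_biSup (fun i => MeasurableSpace.comap (X i) inferInstance) (Set.mem_Iio.mpr h))

variable [MeasurableSpace Ω]

lemma sigmaBefore_le (hX : ∀ i, Measurable (X i)) (n : ℕ) :
    sigmaBefore X n ≤ ‹MeasurableSpace Ω› :=
  iSup₂_le fun i _ => (hX i).comap_le

lemma indepFun_of_measurable_sigmaBefore {γ : Type*} [MeasurableSpace γ] {P : Measure Ω}
    (hX : ∀ i, Measurable (X i)) (hindep : iIndepFun X P) {n : ℕ}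
    {g : Ω → γ} (hg : Measurable[sigmaBefore X n] g) : IndepFun g (X n) P := by
  have h := indep_iSup_of_disjoint (fun i => (hX i).comap_le) hindep
    (S := Set.Iio n) (T := {n}) (by simp)
  rw [iSup_singleton] at h
  exact indep_of_indep_of_le_left h hg.comap_le

end SigmaBefore

section TailSum

variable {Ω : Type*} [MeasurableSpace Ω] {μ : Measure Ω} {T : Ω → ℕ∞}

lemma sum_range_ite_lt_le (k : ℕ∞) (N : ℕ) :
    ∑ n ∈ Finset.range N, (if (n : ℕ∞) < k then (1 : ℝ≥0∞) else 0) ≤ k := by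
  rw [Finset.sum_boole]
  induction k using ENat.recTopCoe with
  | top => simp
  | coe m =>
    have hsub : (Finset.range N).filter (fun n : ℕ => (n : ℕ∞) < m) ⊆ Finset.range m :=
      fun n hn => Finset.mem_range.mpr (by exact_mod_cast (Finset.mem_filter.mp hn).2)
    exact_mod_cast (Finset.card_le_card hsub).trans (Finset.card_range m).le

lemma sum_measure_lt_le_lintegral (hT : ∀ n : ℕ, MeasurableSet {ω | (n : ℕ∞) < T ω}) (N : ℕ) :
    ∑ n ∈ Finset.range N, μ {ω | (n : ℕ∞) < T ω} ≤ ∫⁻ ω, (T ω : ℝ≥0∞) ∂μ :=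
  calc ∑ n ∈ Finset.range N, μ {ω | (n : ℕ∞) < T ω}
      = ∫⁻ ω, ∑ n ∈ Finset.range N, {ω | (n : ℕ∞) < T ω}.indicator 1 ω ∂μ := by
        rw [lintegral_finsetSum _ fun n _ => measurable_one.indicator (hT n)]
        simp_rw [lintegral_indicator_one (hT _)]
    _ ≤ ∫⁻ ω, (T ω : ℝ≥0∞) ∂μ := lintegral_mono fun ω => by
        simpa only [Set.indicator_apply, Set.mem_ofPred_eq, Pi.one_apply]
          using sum_range_ite_lt_le (T ω) N

lemma ofReal_le_lintegral_of_tail_bound [IsProbabilityMeasure μ]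
    (hT : ∀ n : ℕ, MeasurableSet {ω | (n : ℕ∞) < T ω}) {B : ℝ}
    (hB : ∀ N : ℕ, B * (1 - μ.real {ω | (N : ℕ∞) < T ω})
      ≤ ∑ n ∈ Finset.range N, μ.real {ω | (n : ℕ∞) < T ω}) :
    ENNReal.ofReal B ≤ ∫⁻ ω, (T ω : ℝ≥0∞) ∂μ := by
  set E := ∫⁻ ω, (T ω : ℝ≥0∞) ∂μ
  rcases eq_or_ne E ⊤ with hE | hE
  · simp [hE]
  have hsum := sum_measure_lt_le_lintegral (μ := μ) hT
  have htail : Tendsto (fun N : ℕ => μ {ω | (N : ℕ∞) < T ω}) atTop (𝓝 0) :=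
    ENNReal.tendsto_atTop_zero_of_tsum_ne_top
      (ne_top_of_le_ne_top hE (ENNReal.tsum_le_of_sum_range_le hsum))
  have hlim : Tendsto (fun N : ℕ => B * (1 - μ.real {ω | (N : ℕ∞) < T ω})) atTop (𝓝 B) := by
    simpa [measureReal_def] using ((tendsto_const_nhds (x := (1 : ℝ))).sub
      ((ENNReal.tendsto_toReal ENNReal.zero_ne_top).comp htail)).const_mul B
  refine ENNReal.ofReal_le_of_le_toReal (le_of_tendsto' hlim fun N => (hB N).trans ?_)
  simp only [measureReal_def]
  rw [← ENNReal.toReal_sum fun n _ => measure_ne_top μ _]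
  exact ENNReal.toReal_mono hE (hsum N)

end TailSum

section ShiryaevRoberts

variable {Ω : Type*} {L : ℕ → Ω → ℝ} {B : ℝ}

lemma srStat_nonneg {ω : Ω} (h : ∀ t, 0 ≤ L t ω) (n : ℕ) : 0 ≤ srStat L n ω := by
  induction n with
  | zero => exact le_rfl
  | succ n ih => exact mul_nonneg (by linarith) (h n)

lemma lt_srHit_iff {n : ℕ} {ω : Ω} :
    (n : ℕ∞) < srHit L B ω ↔ ∀ t, 1 ≤ t → t ≤ n → srStat L t ω < B := by
  rw [srHit, ← ENat.add_one_le_iff (ENat.natCast_ne_top n), le_sInf_iff]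
  constructor
  · intro h t ht htn
    by_contra! hBt
    have := h t ⟨t, rfl, ht, hBt⟩
    norm_cast at this
    omega
  · rintro h _ ⟨t, rfl, ht, hBt⟩
    have : ¬ t ≤ n := fun htn => (h t ht htn).not_ge hBt
    exact_mod_cast (by omega : n + 1 ≤ t)

lemma le_srStat_succ_of_lt_srHit_of_srHit_le {n : ℕ} {ω : Ω} (hn : (n : ℕ∞) < srHit L B ω)
    (hn' : srHit L B ω ≤ (n + 1 : ℕ)) : B ≤ srStat L (n + 1) ω := by
  rw [← not_lt, lt_srHit_iff] at hn'
  rw [lt_srHit_iff] at hn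
  push Not at hn'
  obtain ⟨t, ht, htn, hBt⟩ := hn'
  obtain rfl : t = n + 1 := by
    by_contra h
    exact (hn t ht (by omega)).not_ge hBt
  exact hBt

lemma measurable_srStat_sigmaBefore {t n : ℕ} (h : t ≤ n) :
    Measurable[sigmaBefore L n] (srStat L t) := by
  induction t with
  | zero => exact measurable_const
  | succ t ih =>
    exact (measurable_const.add (ih (by omega))).mul (measurable_sigmaBefore (by omega))

lemma measurableSet_lt_srHit (n : ℕ) :
    MeasurableSet[sigmaBefore L n] {ω | (n : ℕ∞) < srHit L B ω} := by
  simp_rw [lt_srHit_iff, Set.ofPred_forall]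
  exact .iInter fun t => .iInter fun _ => .iInter fun ht =>
    measurableSet_lt (measurable_srStat_sigmaBefore ht) measurable_const

lemma antitone_setOf_lt_srHit : Antitone fun n : ℕ => {ω | (n : ℕ∞) < srHit L B ω} :=
  fun _ _ h => Set.ofPred_subset_ofPred.mpr fun _ => (Nat.cast_le.mpr h).trans_lt

variable [MeasurableSpace Ω] {P : Measure Ω} [IsProbabilityMeasure P]

lemma integrable_srStat (hmeas : ∀ t, Measurable (L t)) (hindep : iIndepFun L P)
    (hint : ∀ t, Integrable (L t) P) (n : ℕ) : Integrable (srStat L n) P := by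
  induction n with
  | zero => exact integrable_const 0
  | succ n ih =>
    have hindep_n : IndepFun (fun ω => 1 + srStat L n ω) (L n) P :=
      indepFun_of_measurable_sigmaBefore hmeas hindep
        (measurable_const.add (measurable_srStat_sigmaBefore le_rfl))
    exact hindep_n.integrable_mul ((integrable_const 1).add ih) (hint n)

lemma setIntegral_srStat_succ (hmeas : ∀ t, Measurable (L t)) (hindep : iIndepFun L P)
    (hint : ∀ t, Integrable (L t) P) (hmean : ∀ t, ∫ ω, L t ω ∂P = 1) {n : ℕ} {s : Set Ω}
    (hs : MeasurableSet[sigmaBefore L n] s) :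
    ∫ ω in s, srStat L (n + 1) ω ∂P = P.real s + ∫ ω in s, srStat L n ω ∂P := by
  have hs' : MeasurableSet s := sigmaBefore_le hmeas n s hs
  set g := s.indicator fun ω => 1 + srStat L n ω
  have hg : Measurable[sigmaBefore L n] g :=
    (measurable_const.add (measurable_srStat_sigmaBefore le_rfl)).indicator hs
  have hg_int : Integrable g P :=
    ((integrable_const 1).add (integrable_srStat hmeas hindep hint n)).indicator hs'
  calc ∫ ω in s, srStat L (n + 1) ω ∂P
      = ∫ ω, (g * L n) ω ∂P := by
        rw [← integral_indicator hs']
        exact integral_congr_ae (ae_of_all _ fun ω => Set.indicator_mul_left s _ _)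
    _ = ∫ ω, g ω ∂P := by
        rw [(indepFun_of_measurable_sigmaBefore hmeas hindep hg).integral_mul_eq_mul_integral
          hg_int.aestronglyMeasurable (hint n).aestronglyMeasurable, hmean n, mul_one]
    _ = P.real s + ∫ ω in s, srStat L n ω ∂P := by
        rw [integral_indicator hs', integral_add (integrable_const 1).integrableOn
          (integrable_srStat hmeas hindep hint n).integrableOn, setIntegral_const, smul_eq_mul,
          mul_one]

lemma srHit_step_bound (hmeas : ∀ t, Measurable (L t)) (hindep : iIndepFun L P)
    (hint : ∀ t, Integrable (L t) P) (hmean : ∀ t, ∫ ω, L t ω ∂P = 1) (n : ℕ) :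
    B * P.real ({ω | (n : ℕ∞) < srHit L B ω} \ {ω | ((n + 1 : ℕ) : ℕ∞) < srHit L B ω})
        + ∫ ω in {ω | ((n + 1 : ℕ) : ℕ∞) < srHit L B ω}, srStat L (n + 1) ω ∂P
      ≤ P.real {ω | (n : ℕ∞) < srHit L B ω}
        + ∫ ω in {ω | (n : ℕ∞) < srHit L B ω}, srStat L n ω ∂P := by
  set C := {ω | (n : ℕ∞) < srHit L B ω}
  set C' := {ω | ((n + 1 : ℕ) : ℕ∞) < srHit L B ω}
  have hC : MeasurableSet C := sigmaBefore_le hmeas n _ (measurableSet_lt_srHit n)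
  have hC' : MeasurableSet C' := sigmaBefore_le hmeas _ _ (measurableSet_lt_srHit (n + 1))
  have hsub : C' ⊆ C := antitone_setOf_lt_srHit n.le_succ
  have hR := integrable_srStat hmeas hindep hint (n + 1)
  have hhit : B * P.real (C \ C') ≤ ∫ ω in C \ C', srStat L (n + 1) ω ∂P := by
    rw [mul_comm, ← smul_eq_mul, ← setIntegral_const]
    exact setIntegral_mono_on (integrable_const B).integrableOn hR.integrableOn (hC.diff hC')
      fun ω hω => le_srStat_succ_of_lt_srHit_of_srHit_le hω.1 (not_lt.mp hω.2)
  have hsplit : ∫ ω in C, srStat L (n + 1) ω ∂P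
      = ∫ ω in C', srStat L (n + 1) ω ∂P + ∫ ω in C \ C', srStat L (n + 1) ω ∂P := by
    rw [← setIntegral_union Set.disjoint_sdiff_right (hC.diff hC') hR.integrableOn
      hR.integrableOn, Set.union_sdiff_cancel hsub]
  linarith [setIntegral_srStat_succ hmeas hindep hint hmean (measurableSet_lt_srHit (B := B) n)]

lemma srHit_tail_bound (hmeas : ∀ t, Measurable (L t)) (hindep : iIndepFun L P)
    (hint : ∀ t, Integrable (L t) P) (hmean : ∀ t, ∫ ω, L t ω ∂P = 1) (N : ℕ) :
    B * (1 - P.real {ω | (N : ℕ∞) < srHit L B ω})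
        + ∫ ω in {ω | (N : ℕ∞) < srHit L B ω}, srStat L N ω ∂P
      ≤ ∑ n ∈ Finset.range N, P.real {ω | (n : ℕ∞) < srHit L B ω} := by
  induction N with
  | zero =>
    have huniv : {ω | ((0 : ℕ) : ℕ∞) < srHit L B ω} = Set.univ :=
      Set.eq_univ_of_forall fun ω => lt_srHit_iff.mpr fun t ht ht0 => by omega
    rw [huniv]
    simp [srStat]
  | succ N ih =>
    have hdiff := measureReal_sdiff (μ := P)
      (antitone_setOf_lt_srHit (L := L) (B := B) (N.le_add_right 1))
      (sigmaBefore_le hmeas _ _ (measurableSet_lt_srHit (N + 1)))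
    beta_reduce at hdiff
    rw [Finset.sum_range_succ]
    have hstep := srHit_step_bound hmeas hindep hint hmean (B := B) N
    rw [hdiff] at hstep
    linarith

end ShiryaevRoberts

theorem shiryaev_roberts_run_length_lower_bound_general
    {Ω : Type*} [MeasurableSpace Ω] (P : Measure Ω) [IsProbabilityMeasure P]
    (L : ℕ → Ω → ℝ) (hmeas : ∀ t, Measurable (L t))
    (hindep : iIndepFun L P)
    (hident : ∀ t, Measure.map (L t) P = Measure.map (L 0) P)
    (hpos : ∀ t, ∀ᵐ ω ∂P, 0 < L t ω)
    (hint : Integrable (L 0) P) (hmean : ∫ ω, L 0 ω ∂P = 1)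
    (B : ℝ) :
    ENNReal.ofReal B ≤ ∫⁻ ω, (srHit L B ω : ℝ≥0∞) ∂P := by
  have hdist (t : ℕ) : IdentDistrib (L t) (L 0) P P :=
    ⟨(hmeas t).aemeasurable, (hmeas 0).aemeasurable, hident t⟩
  have hint_all (t : ℕ) : Integrable (L t) P := (hdist t).integrable_iff.mpr hint
  have hmean_all (t : ℕ) : ∫ ω, L t ω ∂P = 1 := (hdist t).integral_eq.trans hmean
  have hR_nonneg : ∀ᵐ ω ∂P, ∀ n, 0 ≤ srStat L n ω := by
    filter_upwards [ae_all_iff.mpr hpos] with ω hω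
    exact srStat_nonneg fun t => (hω t).le
  refine ofReal_le_lintegral_of_tail_bound
    (fun n => sigmaBefore_le hmeas n _ (measurableSet_lt_srHit n)) fun N => ?_
  have hR_int : 0 ≤ ∫ ω in {ω | (N : ℕ∞) < srHit L B ω}, srStat L N ω ∂P :=
    setIntegral_nonneg_of_ae (hR_nonneg.mono fun ω h => h N)
  linarith [srHit_tail_bound hmeas hindep hint_all hmean_all (B := B) N]

/-- **Run length lower bound for the Shiryaev–Roberts procedure.** If
`L 0, L 1, …` are i.i.d. a.s. strictly positive integrable random variables with mean `1`
(with `L t` playing the role of `L_{t+1}`) and `B > 0`, then `E[T_B] ≥ B`. -/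
theorem shiryaev_roberts_run_length_lower_bound
    {Ω : Type*} [MeasurableSpace Ω] (P : Measure Ω) [IsProbabilityMeasure P]
    (L : ℕ → Ω → ℝ) (hmeas : ∀ t, Measurable (L t))
    (hindep : iIndepFun L P)
    (hident : ∀ t, Measure.map (L t) P = Measure.map (L 0) P)
    (hpos : ∀ t, ∀ᵐ ω ∂P, 0 < L t ω)
    (hint : Integrable (L 0) P) (hmean : ∫ ω, L 0 ω ∂P = 1)
    (B : ℝ) (hB : 0 < B) :
    ENNReal.ofReal B ≤ ∫⁻ ω, (srHit L B ω : ℝ≥0∞) ∂P :=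
  shiryaev_roberts_run_length_lower_bound_general P L hmeas hindep hident hpos hint hmean B

end QCDStmt
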